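/- Let Σ ∼ (A,B,C,D) be a linear system with reachable subspace R and unobservable subspace N. Suppose R' ⊆ R ⊆ R'' and N' ⊆ N are subspaces, and set X'_1 := R'' ⊖ (R' ∩ N'). Then the controllable-observable subspace X_co = R ⊖ (R ∩ N) is contained in X'_1, and if A', B', C' are the compressions of A, B, C to X'_1, then the moments coincide: C A^k B = C' (A')^k B' for all k ≥ 0. -/

import Mathlib

open Matrix

/-!
The subspace `W = R' ⊓ N'` lies inside `R ⊓ N`, and every vector `x ∈ R''` splits as
`x = P x + w` with `P` the orthogonal projection onto `X₁ = R'' ⊖ W` and `w ∈ W`. Starting from a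
vector of `R`, the compressed trajectory `(P A)^k P B u` therefore stays in `R` and differs from
`A^k B u` by an element of `N`, because `R` and `N` are `A`-invariant. Since `C` kills `N`, the
moments agree. The invariance of `R` and `N` comes from Cayley–Hamilton.
-/

/-- The reachable subspace `R(A,B) = im [B, AB, ..., A^{n-1}B]`, inside Euclidean space. -/
noncomputable def reachE {ι κ : Type*} [Fintype ι] [Fintype κ] [DecidableEq ι] [DecidableEq κ]
    (A : Matrix ι ι ℝ) (B : Matrix ι κ ℝ) : Submodule ℝ (EuclideanSpace ℝ ι) :=
  ⨆ k : Fin (Fintype.card ι), LinearMap.range (Matrix.toEuclideanLin (A ^ (k : ℕ) * B))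

/-- The unobservable subspace `N(C,A) = ker [C; CA; ...; CA^{n-1}]`, inside Euclidean space. -/
noncomputable def unobsE {ι κ : Type*} [Fintype ι] [Fintype κ] [DecidableEq ι] [DecidableEq κ]
    (C : Matrix κ ι ℝ) (A : Matrix ι ι ℝ) : Submodule ℝ (EuclideanSpace ℝ ι) :=
  ⨅ k : Fin (Fintype.card ι), LinearMap.ker (Matrix.toEuclideanLin (C * A ^ (k : ℕ)))

namespace Submodule

variable {𝕜 E : Type*} [RCLike 𝕜] [NormedAddCommGroup E] [InnerProductSpace 𝕜 E]

theorem sub_starProjection_inf_orthogonal_mem {U W : Submodule 𝕜 E} [W.HasOrthogonalProjection]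
    [(U ⊓ Wᗮ).HasOrthogonalProjection] (hWU : W ≤ U) {x : E} (hx : x ∈ U) :
    x - (U ⊓ Wᗮ).starProjection x ∈ W := by
  have hw : W.starProjection x ∈ W := W.starProjection_apply_mem x
  have hproj : (U ⊓ Wᗮ).starProjection x = x - W.starProjection x :=
    eq_starProjection_of_mem_orthogonal'
      ⟨U.sub_mem hx (hWU hw), W.sub_starProjection_mem_orthogonal x⟩
      (orthogonal_le inf_le_right (W.le_orthogonal_orthogonal hw)) (sub_add_cancel _ _).symm
  rwa [hproj, sub_sub_cancel]

noncomputable def compression (V : Submodule 𝕜 E) [V.HasOrthogonalProjection]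
    (T : E →ₗ[𝕜] E) : V →ₗ[𝕜] V :=
  V.orthogonalProjectionOnto.toLinearMap ∘ₗ T ∘ₗ V.subtype

variable {T : E →ₗ[𝕜] E} {R N U W : Submodule 𝕜 E} [W.HasOrthogonalProjection]
  [(U ⊓ Wᗮ).HasOrthogonalProjection]

theorem pow_apply_sub_compression_pow_mem (hTR : R ≤ R.comap T) (hTN : N ≤ N.comap T)
    (hWR : W ≤ R) (hWN : W ≤ N) (hRU : R ≤ U) {x : E} (hx : x ∈ R) (k : ℕ) :
    (T ^ k) x - (((U ⊓ Wᗮ).compression T ^ k) ((U ⊓ Wᗮ).orthogonalProjectionOnto x) : E) ∈ N := by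
  set P := (U ⊓ Wᗮ).starProjection
  have hsplit : ∀ y ∈ R, y - P y ∈ W := fun y hy ↦ sub_starProjection_inf_orthogonal_mem
    (hWR.trans hRU) (hRU hy)
  have hPR : ∀ y ∈ R, P y ∈ R := fun y hy ↦ by
    simpa using R.sub_mem hy (hWR (hsplit y hy))
  suffices ∀ k : ℕ,
      (((U ⊓ Wᗮ).compression T ^ k) ((U ⊓ Wᗮ).orthogonalProjectionOnto x) : E) ∈ R ∧
      (T ^ k) x - (((U ⊓ Wᗮ).compression T ^ k) ((U ⊓ Wᗮ).orthogonalProjectionOnto x) : E) ∈ N from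
    (this k).2
  intro k
  induction k with
  | zero => exact ⟨hPR x hx, hWN (hsplit x hx)⟩
  | succ k ih =>
    set v : E := (((U ⊓ Wᗮ).compression T ^ k) ((U ⊓ Wᗮ).orthogonalProjectionOnto x) : E)
    have hstep : (((U ⊓ Wᗮ).compression T ^ (k + 1))
        ((U ⊓ Wᗮ).orthogonalProjectionOnto x) : E) = P (T v) := by
      rw [pow_succ', Module.End.mul_apply]; rfl
    have hTv : T v ∈ R := hTR ih.1
    rw [hstep]
    refine ⟨hPR _ hTv, ?_⟩
    have hdecomp : (T ^ (k + 1)) x - P (T v) = T ((T ^ k) x - v) + (T v - P (T v)) := by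
      rw [pow_succ', Module.End.mul_apply, map_sub]; abel
    rw [hdecomp]
    exact N.add_mem (hTN ih.2) (hWN (hsplit _ hTv))

theorem comp_pow_comp_eq_compression_pow {F G : Type*} [AddCommGroup F] [Module 𝕜 F]
    [AddCommGroup G] [Module 𝕜 G] {β : F →ₗ[𝕜] E} {γ : E →ₗ[𝕜] G}
    (hTR : R ≤ R.comap T) (hTN : N ≤ N.comap T) (hWR : W ≤ R) (hWN : W ≤ N) (hRU : R ≤ U)
    (hβ : LinearMap.range β ≤ R) (hγ : N ≤ LinearMap.ker γ) (k : ℕ) :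
    γ ∘ₗ (T ^ k) ∘ₗ β = (γ ∘ₗ (U ⊓ Wᗮ).subtype) ∘ₗ ((U ⊓ Wᗮ).compression T ^ k) ∘ₗ
      ((U ⊓ Wᗮ).orthogonalProjectionOnto.toLinearMap ∘ₗ β) := by
  ext u
  simpa [sub_eq_zero] using
    hγ (pow_apply_sub_compression_pow_mem hTR hTN hWR hWN hRU (hβ ⟨u, rfl⟩) k)

end Submodule

namespace Matrix

variable {ι R M : Type*} [Fintype ι] [DecidableEq ι] [CommRing R] [AddCommGroup M] [Module R M]

theorem pow_mem_span_pow_lt_card (A : Matrix ι ι R) (k : ℕ) :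
    A ^ k ∈ Submodule.span R ((A ^ ·) '' Set.Iio (Fintype.card ι)) := by
  nontriviality R
  have hspan := Submodule.span_range_natDegree_eq_adjoin A.charpoly_monic A.aeval_self_charpoly
  simp only [Finset.coe_image, Finset.coe_range, A.charpoly_natDegree_eq_dim] at hspan
  rw [hspan]
  exact Subalgebra.pow_mem _ (Algebra.self_mem_adjoin_singleton R A) k

theorem map_pow_mem_of_forall_lt_card (A : Matrix ι ι R) (L : Matrix ι ι R →ₗ[R] M)
    {S : Submodule R M} (h : ∀ i < Fintype.card ι, L (A ^ i) ∈ S) (k : ℕ) : L (A ^ k) ∈ S := by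
  refine (Submodule.span_le (p := S.comap L)).mpr ?_ (A.pow_mem_span_pow_lt_card k)
  simpa [Set.subset_def] using h

end Matrix

section ReachableUnobservable

variable {ι κ ρ : Type*} [Fintype ι] [Fintype κ] [Fintype ρ] [DecidableEq ι] [DecidableEq κ]
  [DecidableEq ρ]

theorem range_toEuclideanLin_pow_mul_le_reachE (A : Matrix ι ι ℝ) (B : Matrix ι κ ℝ) (k : ℕ) :
    LinearMap.range (toEuclideanLin (A ^ k * B)) ≤ reachE A B := by
  rintro _ ⟨u, rfl⟩
  rw [toLpLin_mul_same, LinearMap.comp_apply]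
  refine A.map_pow_mem_of_forall_lt_card (S := reachE A B)
    (LinearMap.applyₗ (toEuclideanLin B u) ∘ₗ (toEuclideanLin : Matrix ι ι ℝ ≃ₗ[ℝ] _).toLinearMap)
    (fun i hi ↦ Submodule.mem_iSup_of_mem ⟨i, hi⟩ ⟨u, ?_⟩) k
  simp

theorem unobsE_le_ker_toEuclideanLin_mul_pow (C : Matrix ρ ι ℝ) (A : Matrix ι ι ℝ) (k : ℕ) :
    unobsE C A ≤ LinearMap.ker (toEuclideanLin (C * A ^ k)) := by
  intro x hx
  have h : ∀ i < Fintype.card ι, toEuclideanLin (C * A ^ i) x = 0 :=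
    fun i hi ↦ (Submodule.mem_iInf _).mp hx ⟨i, hi⟩
  simp only [LinearMap.mem_ker, toLpLin_mul_same, LinearMap.comp_apply] at h ⊢
  exact A.map_pow_mem_of_forall_lt_card (S := LinearMap.ker (toEuclideanLin C))
    (LinearMap.applyₗ x ∘ₗ (toEuclideanLin : Matrix ι ι ℝ ≃ₗ[ℝ] _).toLinearMap) h k

theorem reachE_le_comap_toEuclideanLin (A : Matrix ι ι ℝ) (B : Matrix ι κ ℝ) :
    reachE A B ≤ (reachE A B).comap (toEuclideanLin A) := by
  refine iSup_le fun k ↦ ?_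
  rintro _ ⟨u, rfl⟩
  simpa [pow_succ', Matrix.mul_assoc] using
    range_toEuclideanLin_pow_mul_le_reachE A B (k + 1) ⟨u, rfl⟩

theorem unobsE_le_comap_toEuclideanLin (C : Matrix ρ ι ℝ) (A : Matrix ι ι ℝ) :
    unobsE C A ≤ (unobsE C A).comap (toEuclideanLin A) := fun x hx ↦
  (Submodule.mem_iInf _).mpr fun k ↦ by
    simpa [pow_succ, ← Matrix.mul_assoc] using unobsE_le_ker_toEuclideanLin_mul_pow C A (k + 1) hx

end ReachableUnobservable

/-- Moment-preserving compression: let `Σ ∼ (A,B,C,D)` have reachable subspace `R` and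
unobservable subspace `N`. If `R' ⊆ R ⊆ R''` and `N' ⊆ N`, and `X₁ = R'' ⊖ (R' ∩ N')`
(`= R'' ⊓ (R' ⊓ N')ᗮ`), then the controllable-observable subspace `X_co = R ⊖ (R ∩ N)` is
contained in `X₁`, and the compressions `A', B', C'` of `A, B, C` to `X₁` satisfy
`C A^k B = C' (A')^k B'` for all `k ≥ 0`. -/
theorem moment_preserving_compression {ι κ ρ : Type*}
    [Fintype ι] [Fintype κ] [Fintype ρ] [DecidableEq ι] [DecidableEq κ] [DecidableEq ρ]
    (A : Matrix ι ι ℝ) (B : Matrix ι κ ℝ) (C : Matrix ρ ι ℝ)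
    (R' R'' N' : Submodule ℝ (EuclideanSpace ℝ ι))
    (hR' : R' ≤ reachE A B) (hR'' : reachE A B ≤ R'') (hN' : N' ≤ unobsE C A) :
    reachE A B ⊓ (reachE A B ⊓ unobsE C A)ᗮ ≤ R'' ⊓ (R' ⊓ N')ᗮ ∧
      ∀ k : ℕ,
        Matrix.toEuclideanLin (C * A ^ k * B) =
          (Matrix.toEuclideanLin C ∘ₗ (R'' ⊓ (R' ⊓ N')ᗮ).subtype) ∘ₗ
            (((R'' ⊓ (R' ⊓ N')ᗮ).orthogonalProjectionOnto.toLinearMap ∘ₗ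
                Matrix.toEuclideanLin A ∘ₗ (R'' ⊓ (R' ⊓ N')ᗮ).subtype) ^ k) ∘ₗ
            ((R'' ⊓ (R' ⊓ N')ᗮ).orthogonalProjectionOnto.toLinearMap ∘ₗ
              Matrix.toEuclideanLin B) := by
  refine ⟨inf_le_inf hR'' (Submodule.orthogonal_le (inf_le_inf hR' hN')), fun k ↦ ?_⟩
  rw [Matrix.mul_assoc, toLpLin_mul_same, toLpLin_mul_same, toLpLin_pow]
  exact Submodule.comp_pow_comp_eq_compression_pow (reachE_le_comap_toEuclideanLin A B)
    (unobsE_le_comap_toEuclideanLin C A) (inf_le_left.trans hR') (inf_le_right.trans hN') hR''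
    (by simpa using range_toEuclideanLin_pow_mul_le_reachE A B 0)
    (by simpa using unobsE_le_ker_toEuclideanLin_mul_pow C A 0) k
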